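/- (Gelfand–Graev representation) Let q be a prime power, G = GL(2,F_q), U = {(1 b; 0 1) : b ∈ F_q} the subgroup of unipotent upper-triangular matrices, and χ a nontrivial one-dimensional character of U (equivalently, a nontrivial additive character of F_q). Then the induced representation Ind_U^G χ is multiplicity-free: every irreducible representation of G occurs in Ind_U^G χ with multiplicity at most 1. -/

import Mathlib

open scoped BigOperators ComplexConjugate Classical

set_option linter.unusedSectionVars false
set_option synthInstance.maxHeartbeats 1000000
set_option maxHeartbeats 1000000

noncomputable section

namespace GLMF

/-- Left translation of functions on `G`: `(translate h f) g = f (h⁻¹ * g)`. -/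
def translate {G A : Type} [Group G] (h : G) (f : G → A) : G → A := fun g => f (h⁻¹ * g)

/-- Irreducibility of a representation. -/
def IsIrreducibleRep {H W : Type} [Group H] [AddCommGroup W] [Module ℂ W]
    (ρ : H →* (W ≃ₗ[ℂ] W)) : Prop :=
  (⊥ : Submodule ℂ W) ≠ ⊤ ∧
    ∀ p : Submodule ℂ W, (∀ (h : H) (x : W), x ∈ p → ρ h x ∈ p) → p = ⊥ ∨ p = ⊤

/-- The space of the representation of `G` induced by a one-dimensional character `χ` of the
subgroup `K`: functions `f : G → ℂ` with `f (g k) = χ(k)⁻¹ f g`. -/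
def indChar {G : Type} [Group G] (K : Subgroup G) (χ : ↥K →* ℂ) : Submodule ℂ (G → ℂ) where
  carrier := {f | ∀ (g : G) (k : K), f (g * (k : G)) = (χ k)⁻¹ * f g}
  add_mem' := by
    intro a b ha hb g k
    simp only [Pi.add_apply, ha g k, hb g k, mul_add]
  zero_mem' := by intro g k; simp
  smul_mem' := by
    intro c a ha g k
    simp only [Pi.smul_apply, smul_eq_mul, ha g k]
    ring

/-- The space `Hom_G(W, Ind_K^G χ)` of `G`-equivariant linear maps from `(σ, W)` to the
representation induced by the character `χ`. -/
def homGIndChar {G : Type} [Group G] (K : Subgroup G) (χ : ↥K →* ℂ)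
    {W : Type} [AddCommGroup W] [Module ℂ W] (σ : G →* (W ≃ₗ[ℂ] W)) :
    Submodule ℂ (W →ₗ[ℂ] (G → ℂ)) where
  carrier := {A | (∀ w : W, A w ∈ indChar K χ) ∧
    ∀ (g : G) (w : W), A (σ g w) = translate g (A w)}
  add_mem' := by
    rintro A B ⟨hA₁, hA₂⟩ ⟨hB₁, hB₂⟩
    refine ⟨fun w => (indChar K χ).add_mem (hA₁ w) (hB₁ w), fun g w => ?_⟩
    funext x
    simp [translate, hA₂ g w, hB₂ g w]
  zero_mem' := by
    refine ⟨fun w => (indChar K χ).zero_mem, fun g w => ?_⟩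
    funext x
    simp [translate]
  smul_mem' := by
    rintro c A ⟨hA₁, hA₂⟩
    refine ⟨fun w => (indChar K χ).smul_mem c (hA₁ w), fun g w => ?_⟩
    funext x
    simp [translate, hA₂ g w]

/-- The representation of `G` induced by the one-dimensional character `χ` of `K ≤ G` is
multiplicity-free: every irreducible representation of `G` occurs in it with multiplicity at
most `1`. -/
def IsMultFreeChar {G : Type} [Group G] (K : Subgroup G) (χ : ↥K →* ℂ) : Prop :=
  ∀ (W : Type) [AddCommGroup W] [Module ℂ W] [FiniteDimensional ℂ W]
    (σ : G →* (W ≃ₗ[ℂ] W)), IsIrreducibleRep σ →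
      Module.finrank ℂ ↥(homGIndChar K χ σ) ≤ 1

variable (F : Type) [Field F] [Fintype F] [DecidableEq F]

/-- The unipotent subgroup `U = {(1 b; 0 1) : b ∈ F}` of `GL(2,F)`. -/
def unipotent : Subgroup (Matrix.GeneralLinearGroup (Fin 2) F) where
  carrier := {g | ∃ b : F, (g : Matrix (Fin 2) (Fin 2) F) = !![1, b; 0, 1]}
  one_mem' := ⟨0, by simp [Matrix.one_fin_two]⟩
  mul_mem' := by
    rintro x y ⟨b, hx⟩ ⟨d, hy⟩
    refine ⟨d + b, ?_⟩
    show ((x * y : Matrix.GeneralLinearGroup (Fin 2) F) : Matrix (Fin 2) (Fin 2) F) = _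
    rw [Units.val_mul, hx, hy, Matrix.mul_fin_two]
    norm_num
  inv_mem' := by
    rintro x ⟨b, hx⟩
    refine ⟨-b, ?_⟩
    have h : (x : Matrix (Fin 2) (Fin 2) F) * !![1, -b; 0, 1] = 1 := by
      rw [hx, Matrix.mul_fin_two]
      norm_num
      exact Matrix.one_fin_two.symm
    exact Units.inv_eq_of_mul_eq_one_right h

/-- The Cartan subgroup `C = {(a ηb; b a)}` of `GL(2,F)`, where `η` is a fixed generator of
the multiplicative group `F*`. -/
def cartan (eta : F) : Subgroup (Matrix.GeneralLinearGroup (Fin 2) F) where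
  carrier := {g | ∃ a b : F, (g : Matrix (Fin 2) (Fin 2) F) = !![a, eta * b; b, a]}
  one_mem' := ⟨1, 0, by rw [mul_zero]; exact Matrix.one_fin_two⟩
  mul_mem' := by
    rintro x y ⟨a, b, hx⟩ ⟨c, d, hy⟩
    refine ⟨a * c + eta * b * d, a * d + b * c, ?_⟩
    show ((x * y : Matrix.GeneralLinearGroup (Fin 2) F) : Matrix (Fin 2) (Fin 2) F) = _
    rw [Units.val_mul, hx, hy, Matrix.mul_fin_two]
    congr 1 <;> ring
  inv_mem' := by
    rintro x ⟨a, b, hx⟩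
    have hdet : a * a - eta * b * b ≠ 0 := by
      have hu : IsUnit ((x : Matrix (Fin 2) (Fin 2) F)).det :=
        (Matrix.isUnit_iff_isUnit_det _).mp x.isUnit
      rw [hx, Matrix.det_fin_two_of] at hu
      simpa [isUnit_iff_ne_zero, mul_comm, mul_assoc, mul_left_comm, sub_eq_iff_eq_add]
        using hu
    set D : F := a * a - eta * b * b with hD
    refine ⟨a / D, -(b / D), ?_⟩
    have h : (x : Matrix (Fin 2) (Fin 2) F) * !![a / D, eta * -(b / D); -(b / D), a / D] = 1 := by
      rw [hx, Matrix.mul_fin_two]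
      have : ∀ u v w z : F, u = 1 → v = 0 → w = 0 → z = 1 → !![u, v; w, z] = 1 := by
        rintro u v w z rfl rfl rfl rfl
        exact Matrix.one_fin_two.symm
      refine this _ _ _ _ ?_ ?_ ?_ ?_ <;> field_simp <;> ring
    exact Units.inv_eq_of_mul_eq_one_right h

/-- The embedding `GL(2,F) → GL(2,K)` induced by a field extension `F ⊆ K`. -/
def glEmbed (K : Type) [Field K] [Fintype K] [DecidableEq K] [Algebra F K] :
    Matrix.GeneralLinearGroup (Fin 2) F →* Matrix.GeneralLinearGroup (Fin 2) K :=
  Units.map ((algebraMap F K).mapMatrix).toMonoidHom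


/-!
Frobenius reciprocity (`evalOne`) embeds `Hom_G(W, Ind_U^G χ)` into the space of functionals `λ`
on `W` with `λ ∘ σ(u) = χ(u) λ`, i.e. into the `χ⁻¹`-eigenspace of `U` in the contragredient
`W*`, which is again irreducible. In an irreducible representation every vector of the
`ψ`-eigenspace of `U` is reached from any nonzero one by the Hecke operators `e σ(g) e`, where
`e = ∑ ψ(u)⁻¹ σ(u)`; so if these operators commute, a common eigenvector shows that the eigenspace
is at most a line. Commutativity is Gelfand's trick: the anti-involution `g ↦ w gᵀ w` of `GL(2)`
fixes `U` pointwise and fixes every Hecke operator. On the big cell it acts as conjugation by an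
element of `U`, it fixes upper triangular matrices with equal diagonal entries, and on the
remaining double cosets the Hecke operators vanish because `ψ` is nontrivial.
-/

section CommutingFamily

variable {k V : Type*} [Field k] [IsAlgClosed k] [AddCommGroup V] [Module k V]
  [FiniteDimensional k V]

theorem finrank_le_one_of_commute_of_transitive (S : Set (Module.End k V))
    (hcomm : ∀ A ∈ S, ∀ B ∈ S, Commute A B) (htrans : ∀ v ≠ 0, ∀ w, ∃ A ∈ S, A v = w) :
    Module.finrank k V ≤ 1 := by
  rcases subsingleton_or_nontrivial V with hV | hV
  · simp [Module.finrank_zero_of_subsingleton]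
  obtain ⟨v, hv⟩ := exists_ne (0 : V)
  refine finrank_le_one v fun w => ?_
  obtain ⟨A, hA, rfl⟩ := htrans v hv w
  obtain ⟨μ, hμ⟩ := Module.End.exists_eigenvalue A
  obtain ⟨u, hu⟩ := hμ.exists_hasEigenvector
  obtain ⟨B, hB, rfl⟩ := htrans u hu.2 v
  refine ⟨μ, ?_⟩
  rw [← Module.End.mul_apply, (hcomm A hA B hB).eq, Module.End.mul_apply, hu.apply_eq_smul,
    map_smul]

end CommutingFamily

section Hecke

variable {G X : Type*} [Group G] [AddCommGroup X] [Module ℂ X]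
  (ρ : Representation ℂ G X) {K : Subgroup G} (ψ : K →* ℂ)

def charSpace : Submodule ℂ X where
  carrier := {x | ∀ k : K, ρ k x = ψ k • x}
  add_mem' hx hy k := by rw [map_add, hx k, hy k, smul_add]
  zero_mem' k := by rw [map_zero, smul_zero]
  smul_mem' c x hx k := by rw [map_smul, hx k, smul_comm]

variable [Fintype K]

/-- `|K|` times the projection onto `charSpace ρ ψ`, see `charProj_mul_self`. -/
def charProj : Module.End ℂ X := ∑ k : K, ψ k⁻¹ • ρ k

theorem charProj_mul_rep (k : K) : charProj ρ ψ * ρ k = ψ k • charProj ρ ψ := by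
  have hψ (j : K) : ψ j⁻¹ = ψ k * ψ (j * k)⁻¹ := by
    rw [← map_mul, mul_inv_rev, mul_inv_cancel_left]
  calc charProj ρ ψ * ρ k = ∑ j : K, ψ k • ψ (j * k)⁻¹ • ρ (j * k : K) := by
        simp only [charProj, Finset.sum_mul, smul_mul_assoc, ← map_mul, Subgroup.coe_mul]
        exact Finset.sum_congr rfl fun j _ => by rw [hψ, mul_smul]
    _ = ψ k • charProj ρ ψ := by
        rw [← Finset.smul_sum, charProj]
        exact congrArg _ (Equiv.sum_comp (Equiv.mulRight k) fun j => ψ j⁻¹ • ρ j)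

theorem rep_mul_charProj (k : K) : ρ k * charProj ρ ψ = ψ k • charProj ρ ψ := by
  have hψ (j : K) : ψ j⁻¹ = ψ (k * j)⁻¹ * ψ k := by
    rw [← map_mul, mul_inv_rev, inv_mul_cancel_right]
  calc ρ k * charProj ρ ψ = ∑ j : K, ψ k • ψ (k * j)⁻¹ • ρ (k * j : K) := by
        simp only [charProj, Finset.mul_sum, mul_smul_comm, ← map_mul, Subgroup.coe_mul]
        exact Finset.sum_congr rfl fun j _ => by rw [hψ, mul_comm, mul_smul]
    _ = ψ k • charProj ρ ψ := by
        rw [← Finset.smul_sum, charProj]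
        exact congrArg _ (Equiv.sum_comp (Equiv.mulLeft k) fun j => ψ j⁻¹ • ρ j)

theorem charProj_apply_mem (x : X) : charProj ρ ψ x ∈ charSpace ρ ψ := fun k => by
  rw [← Module.End.mul_apply, rep_mul_charProj, LinearMap.smul_apply]

theorem charProj_apply_of_mem {v : X} (hv : v ∈ charSpace ρ ψ) :
    charProj ρ ψ v = (Fintype.card K : ℂ) • v := by
  have hterm (k : K) : (ψ k⁻¹ • ρ k) v = v := by
    rw [LinearMap.smul_apply, hv k, smul_smul, ← map_mul, inv_mul_cancel, map_one, one_smul]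
  simp only [charProj, LinearMap.sum_apply, hterm, Finset.sum_const, Finset.card_univ,
    Nat.cast_smul_eq_nsmul]

theorem charProj_mul_self : charProj ρ ψ * charProj ρ ψ = (Fintype.card K : ℂ) • charProj ρ ψ := by
  have hterm (k : K) : charProj ρ ψ * (ψ k⁻¹ • ρ k) = charProj ρ ψ := by
    rw [mul_smul_comm, charProj_mul_rep, smul_smul, ← map_mul, inv_mul_cancel, map_one, one_smul]
  conv_lhs => arg 2; rw [charProj]
  simp only [Finset.mul_sum, hterm, Finset.sum_const, Finset.card_univ, Nat.cast_smul_eq_nsmul]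

def hecke (g : G) : Module.End ℂ X := charProj ρ ψ * ρ g * charProj ρ ψ

theorem hecke_mul_left (k : K) (g : G) : hecke ρ ψ (k * g) = ψ k • hecke ρ ψ g := by
  rw [hecke, hecke, map_mul, ← mul_assoc, charProj_mul_rep, smul_mul_assoc, smul_mul_assoc]

theorem hecke_mul_right (g : G) (k : K) : hecke ρ ψ (g * k) = ψ k • hecke ρ ψ g := by
  rw [hecke, hecke, map_mul, mul_assoc, mul_assoc, rep_mul_charProj, mul_smul_comm, mul_smul_comm,
    mul_assoc]

theorem hecke_conj (k : K) (g : G) : hecke ρ ψ (k * g * (k : G)⁻¹) = hecke ρ ψ g := by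
  rw [← Subgroup.coe_inv, hecke_mul_right, hecke_mul_left, smul_smul, ← map_mul, inv_mul_cancel,
    map_one, one_smul]

theorem hecke_eq_zero_of_mul_eq {g : G} {k k' : K} (h : k' * g = g * k) (hψ : ψ k' ≠ ψ k) :
    hecke ρ ψ g = 0 := by
  have hsmul : ψ k' • hecke ρ ψ g = ψ k • hecke ρ ψ g := by
    rw [← hecke_mul_left, ← hecke_mul_right, h]
  have hzero : (ψ k' - ψ k) • hecke ρ ψ g = 0 := by rw [sub_smul, hsmul, sub_self]
  exact (smul_eq_zero.mp hzero).resolve_left (sub_ne_zero.mpr hψ)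

theorem hecke_apply_mem (g : G) (x : X) : hecke ρ ψ g x ∈ charSpace ρ ψ :=
  charProj_apply_mem ρ ψ _

theorem mul_charProj_mul (A B : Module.End ℂ X) :
    A * charProj ρ ψ * B = ∑ k : K, ψ k⁻¹ • (A * ρ k * B) := by
  simp only [charProj, Finset.mul_sum, Finset.sum_mul, mul_smul_comm, smul_mul_assoc]

theorem hecke_mul_hecke (g h : G) :
    hecke ρ ψ g * hecke ρ ψ h
      = (Fintype.card K : ℂ) • ∑ k : K, ψ k⁻¹ • hecke ρ ψ (g * k * h) := by
  calc hecke ρ ψ g * hecke ρ ψ h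
      = charProj ρ ψ * ρ g * (charProj ρ ψ * charProj ρ ψ) * (ρ h * charProj ρ ψ) := by
        simp only [hecke, mul_assoc]
    _ = _ := by
        rw [charProj_mul_self, mul_smul_comm, smul_mul_assoc,
          mul_charProj_mul ρ ψ (charProj ρ ψ * ρ g) (ρ h * charProj ρ ψ)]
        simp only [hecke, map_mul, mul_assoc]

theorem commute_hecke_of_antiHom (τ : G → G) (hτ : ∀ a b, τ (a * b) = τ b * τ a)
    (hτK : ∀ k : K, τ k = k) (hP : ∀ g, hecke ρ ψ (τ g) = hecke ρ ψ g) (g h : G) :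
    Commute (hecke ρ ψ g) (hecke ρ ψ h) := by
  have hsym (k : K) : hecke ρ ψ (g * k * h) = hecke ρ ψ (τ h * k * τ g) := by
    rw [← hP, hτ, hτ, hτK, ← mul_assoc]
  calc hecke ρ ψ g * hecke ρ ψ h
      = (Fintype.card K : ℂ) • ∑ k : K, ψ k⁻¹ • hecke ρ ψ (τ h * k * τ g) := by
        simp only [hecke_mul_hecke, hsym]
    _ = hecke ρ ψ h * hecke ρ ψ g := by rw [← hecke_mul_hecke, hP, hP]

theorem exists_sum_hecke_apply_eq [Fintype G] {v₀ : X} (h₀ : v₀ ∈ charSpace ρ ψ)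
    (hcyc : Submodule.span ℂ (Set.range fun g => ρ g v₀) = ⊤) {v : X} (hv : v ∈ charSpace ρ ψ) :
    ∃ c : G → ℂ, ∑ g, c g • hecke ρ ψ g v₀ = v := by
  obtain ⟨c, hc⟩ := (Submodule.mem_span_range_iff_exists_fun ℂ).mp
    (hcyc ▸ Submodule.mem_top : v ∈ Submodule.span ℂ (Set.range fun g => ρ g v₀))
  have hq : (Fintype.card K : ℂ) ^ 2 ≠ 0 :=
    pow_ne_zero 2 (Nat.cast_ne_zero.mpr Fintype.card_ne_zero)
  have hsum : ∑ g, c g • hecke ρ ψ g v₀ = ((Fintype.card K : ℂ) ^ 2) • v := by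
    calc ∑ g, c g • hecke ρ ψ g v₀
        = (Fintype.card K : ℂ) • charProj ρ ψ (∑ g, c g • ρ g v₀) := by
          simp only [hecke, Module.End.mul_apply, charProj_apply_of_mem ρ ψ h₀, map_smul, map_sum,
            Finset.smul_sum, smul_comm (c _)]
      _ = _ := by rw [hc, charProj_apply_of_mem ρ ψ hv, smul_smul, sq]
  refine ⟨fun g => ((Fintype.card K : ℂ) ^ 2)⁻¹ * c g, ?_⟩
  simp only [mul_smul, ← Finset.smul_sum, hsum]
  rw [smul_smul, inv_mul_cancel₀ hq, one_smul]

def heckeOn (g : G) : Module.End ℂ (charSpace ρ ψ) :=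
  (hecke ρ ψ g).restrict fun x _ => hecke_apply_mem ρ ψ g x

theorem finrank_charSpace_le_one [Fintype G] [FiniteDimensional ℂ X]
    (hcomm : ∀ g h, Commute (hecke ρ ψ g) (hecke ρ ψ h))
    (hcyc : ∀ v ≠ 0, Submodule.span ℂ (Set.range fun g => ρ g v) = ⊤) :
    Module.finrank ℂ (charSpace ρ ψ) ≤ 1 := by
  refine finrank_le_one_of_commute_of_transitive (Submodule.span ℂ (Set.range (heckeOn ρ ψ)))
    (fun A hA B hB => ?_) fun v hv w => ?_
  · obtain ⟨a, rfl⟩ := (Submodule.mem_span_range_iff_exists_fun ℂ).mp hA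
    obtain ⟨b, rfl⟩ := (Submodule.mem_span_range_iff_exists_fun ℂ).mp hB
    exact Commute.sum_left _ _ _ fun g _ => Commute.sum_right _ _ _ fun h _ =>
      ((LinearMap.restrict_commute (hcomm g h) _ _).smul_left _).smul_right _
  · obtain ⟨c, hc⟩ := exists_sum_hecke_apply_eq ρ ψ v.2
      (hcyc v (by simpa using hv)) w.2
    refine ⟨∑ g, c g • heckeOn ρ ψ g, Submodule.sum_mem _ fun g _ =>
      Submodule.smul_mem _ _ (Submodule.subset_span ⟨g, rfl⟩), Subtype.ext ?_⟩
    simpa [heckeOn] using hc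

end Hecke

section Contragredient

variable {G W : Type} [Group G] [AddCommGroup W] [Module ℂ W]

def toRepresentation (σ : G →* (W ≃ₗ[ℂ] W)) : Representation ℂ G W :=
  LinearEquiv.automorphismGroup.toLinearMapMonoidHom.comp σ

@[simp]
theorem toRepresentation_apply (σ : G →* (W ≃ₗ[ℂ] W)) (g : G) (w : W) :
    toRepresentation σ g w = σ g w :=
  rfl

theorem span_dual_orbit_eq_top [FiniteDimensional ℂ W] {σ : G →* (W ≃ₗ[ℂ] W)}
    (hσ : IsIrreducibleRep σ) {f : Module.Dual ℂ W} (hf : f ≠ 0) :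
    Submodule.span ℂ (Set.range fun g => (toRepresentation σ).dual g f) = ⊤ := by
  set M := Submodule.span ℂ (Set.range fun g => (toRepresentation σ).dual g f)
  have hinv (g : G) (w : W) (hw : w ∈ M.dualCoannihilator) : σ g w ∈ M.dualCoannihilator := by
    rw [Submodule.mem_dualCoannihilator] at hw ⊢
    have hle : M ≤ LinearMap.ker (Module.Dual.eval ℂ W (σ g w)) := by
      rw [Submodule.span_le]
      rintro _ ⟨h, rfl⟩
      have := hw _ (Submodule.subset_span ⟨g⁻¹ * h, rfl⟩)
      simpa [Representation.dual_apply, Module.Dual.transpose_apply, map_mul] using this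
    exact fun φ hφ => hle hφ
  rcases hσ.2 _ hinv with hbot | htop
  · apply Submodule.eq_top_of_finrank_eq
    have hdim := Subspace.finrank_add_finrank_dualCoannihilator_eq M
    rw [hbot, finrank_bot, add_zero] at hdim
    rw [hdim, Subspace.dual_finrank_eq]
  · refine absurd (LinearMap.ext fun w => ?_) hf
    have hw : w ∈ M.dualCoannihilator := htop ▸ Submodule.mem_top
    have hfM : f ∈ M := Submodule.subset_span ⟨1, by dsimp only; rw [map_one, Module.End.one_apply]⟩
    exact (Submodule.mem_dualCoannihilator _).mp hw f hfM

end Contragredient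

section Frobenius

variable {G W : Type} [Group G] [AddCommGroup W] [Module ℂ W] {K : Subgroup G} {χ : K →* ℂ}
  {σ : G →* (W ≃ₗ[ℂ] W)}

theorem homGIndChar_apply_eq {A : W →ₗ[ℂ] G → ℂ} (hA : A ∈ homGIndChar K χ σ) (w : W) (g : G) :
    A w g = A (σ g⁻¹ w) 1 := by
  rw [hA.2, translate, inv_inv, mul_one]

variable (K χ σ) in
def evalOne : homGIndChar K χ σ →ₗ[ℂ] charSpace (toRepresentation σ).dual (invMonoidHom.comp χ) :=
  LinearMap.codRestrict _ (LinearMap.llcomp ℂ W (G → ℂ) ℂ (LinearMap.proj 1) ∘ₗ Submodule.subtype _)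
    fun A k => LinearMap.ext fun w => by
      have hk := A.2.1 w 1 k
      rw [one_mul, homGIndChar_apply_eq A.2] at hk
      simpa [Representation.dual_apply, Module.Dual.transpose_apply] using hk

@[simp]
theorem evalOne_apply (A : homGIndChar K χ σ) (w : W) :
    (evalOne K χ σ A : Module.Dual ℂ W) w = (A : W →ₗ[ℂ] G → ℂ) w 1 :=
  rfl

theorem evalOne_injective : Function.Injective (evalOne K χ σ) := by
  refine (injective_iff_map_eq_zero _).mpr fun A hA => ?_
  ext w g
  have := LinearMap.congr_fun (congrArg Subtype.val hA) (σ g⁻¹ w)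
  simpa [homGIndChar_apply_eq A.2 w g] using this

theorem finrank_homGIndChar_le [FiniteDimensional ℂ W] :
    Module.finrank ℂ (homGIndChar K χ σ)
      ≤ Module.finrank ℂ (charSpace (toRepresentation σ).dual (invMonoidHom.comp χ)) :=
  LinearMap.finrank_le_finrank_of_injective evalOne_injective

end Frobenius

section AntidiagTranspose

open Matrix Matrix.GeneralLinearGroup

variable {R : Type*} [CommRing R]

def antidiagTranspose (g : GL (Fin 2) R) : GL (Fin 2) R :=
  mk'' !![g 1 1, g 0 1; g 1 0, g 0 0] <| by
    simpa [det_fin_two, mul_comm] using (isUnit_iff_isUnit_det _).mp g.isUnit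

theorem antidiagTranspose_apply (g : GL (Fin 2) R) :
    (antidiagTranspose g : Matrix (Fin 2) (Fin 2) R) = !![g 1 1, g 0 1; g 1 0, g 0 0] :=
  rfl

theorem antidiagTranspose_mul (g h : GL (Fin 2) R) :
    antidiagTranspose (g * h) = antidiagTranspose h * antidiagTranspose g := by
  ext i j
  fin_cases i <;> fin_cases j <;>
    simp [antidiagTranspose_apply, Matrix.mul_apply, Fin.sum_univ_two] <;> ring

theorem antidiagTranspose_eq_self {g : GL (Fin 2) R} (h₁₀ : g 1 0 = 0) (hdiag : g 0 0 = g 1 1) :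
    antidiagTranspose g = g := by
  ext i j
  fin_cases i <;> fin_cases j <;> simp [antidiagTranspose_apply, h₁₀, hdiag]

end AntidiagTranspose

section BruhatCells

open Matrix Matrix.GeneralLinearGroup

variable {K : Type*} [Field K]

theorem antidiagTranspose_eq_conj {g : GL (Fin 2) K} (h₁₀ : g 1 0 ≠ 0) :
    antidiagTranspose g = upperRightHom ((g 1 1 - g 0 0) / g 1 0) * g
      * (upperRightHom ((g 1 1 - g 0 0) / g 1 0))⁻¹ := by
  rw [eq_mul_inv_iff_mul_eq]
  have hdet : g 0 0 * g 1 1 - g 0 1 * g 1 0 ≠ 0 := by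
    simpa [det_fin_two] using ((isUnit_iff_isUnit_det _).mp g.isUnit).ne_zero
  ext i j
  fin_cases i <;> fin_cases j <;>
    simp [antidiagTranspose_apply, Matrix.mul_apply, Fin.sum_univ_two] <;> field_simp <;> ring

theorem apply_one_one_ne_zero_of_lower_eq_zero {g : GL (Fin 2) K} (h₁₀ : g 1 0 = 0) :
    g 1 1 ≠ 0 := by
  intro h
  simpa [det_fin_two, h₁₀, h] using ((isUnit_iff_isUnit_det _).mp g.isUnit).ne_zero

theorem mul_upperRightHom_of_lower_eq_zero {g : GL (Fin 2) K} (h₁₀ : g 1 0 = 0) (x : K) :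
    g * upperRightHom x = upperRightHom (g 0 0 * x / g 1 1) * g := by
  have h₁₁ := apply_one_one_ne_zero_of_lower_eq_zero h₁₀
  ext i j
  fin_cases i <;> fin_cases j <;>
    simp [Matrix.mul_apply, Fin.sum_univ_two, h₁₀, h₁₁, add_comm]

end BruhatCells

section GelfandGraev

open Matrix.GeneralLinearGroup

variable {F}

def unipotentElt (x : F) : unipotent F := ⟨upperRightHom x, x, rfl⟩

omit [Fintype F] [DecidableEq F] in
theorem unipotentElt_add (x y : F) : unipotentElt (x + y) = unipotentElt x * unipotentElt y :=
  Subtype.ext (AddChar.map_add_eq_mul _ x y)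

omit [Fintype F] [DecidableEq F] in
theorem exists_unipotentElt_eq (k : unipotent F) : ∃ x, unipotentElt x = k := by
  obtain ⟨x, hx⟩ := k.2
  exact ⟨x, Subtype.ext (Units.ext hx.symm)⟩

omit [Fintype F] [DecidableEq F] in
theorem antidiagTranspose_unipotent (k : unipotent F) :
    antidiagTranspose (k : GL (Fin 2) F) = k := by
  obtain ⟨x, rfl⟩ := exists_unipotentElt_eq k
  exact antidiagTranspose_eq_self (by simp [unipotentElt]) (by simp [unipotentElt])

variable {X : Type*} [AddCommGroup X] [Module ℂ X] (ρ : Representation ℂ (GL (Fin 2) F) X)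
  {ψ : unipotent F →* ℂ}

theorem hecke_eq_zero_of_lower_eq_zero (hψ : ψ ≠ 1) {g : GL (Fin 2) F} (h₁₀ : g 1 0 = 0)
    (hdiag : g 0 0 ≠ g 1 1) : hecke ρ ψ g = 0 := by
  obtain ⟨c, hc⟩ : ∃ c, ψ (unipotentElt c) ≠ 1 := by
    contrapose! hψ
    ext k
    obtain ⟨x, rfl⟩ := exists_unipotentElt_eq k
    exact hψ x
  have h₁₁ := apply_one_one_ne_zero_of_lower_eq_zero h₁₀
  have hsub : g 0 0 - g 1 1 ≠ 0 := sub_ne_zero.mpr hdiag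
  obtain ⟨x, hx⟩ : ∃ x, g 0 0 * x / g 1 1 = x + c :=
    ⟨c * g 1 1 / (g 0 0 - g 1 1), by field_simp; ring⟩
  refine hecke_eq_zero_of_mul_eq ρ ψ (k := unipotentElt x) (k' := unipotentElt (x + c)) ?_ ?_
  · change upperRightHom (x + c) * g = g * upperRightHom x
    rw [mul_upperRightHom_of_lower_eq_zero h₁₀, hx]
  · have hψx : ψ (unipotentElt x) ≠ 0 := (ψ.toHomUnits _).ne_zero
    rwa [unipotentElt_add, map_mul, Ne, mul_eq_left₀ hψx]

theorem hecke_antidiagTranspose (hψ : ψ ≠ 1) (g : GL (Fin 2) F) :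
    hecke ρ ψ (antidiagTranspose g) = hecke ρ ψ g := by
  by_cases h₁₀ : g 1 0 = 0
  · by_cases hdiag : g 0 0 = g 1 1
    · rw [antidiagTranspose_eq_self h₁₀ hdiag]
    · rw [hecke_eq_zero_of_lower_eq_zero ρ hψ h₁₀ hdiag,
        hecke_eq_zero_of_lower_eq_zero ρ hψ (by simpa [antidiagTranspose_apply] using h₁₀)
          (by simpa [antidiagTranspose_apply] using Ne.symm hdiag)]
  · rw [antidiagTranspose_eq_conj h₁₀]
    exact hecke_conj ρ ψ (unipotentElt _) g

end GelfandGraev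

/-- the Gelfand–Graev representation of `GL(2,F_q)`.  For every nontrivial
one-dimensional character `χ` of the unipotent subgroup `U`, the induced representation
`Ind_U^{GL(2,F_q)} χ` is multiplicity-free. -/
theorem statement16 (χ : ↥(unipotent F) →* ℂ) (hχ : χ ≠ 1) :
    IsMultFreeChar (unipotent F) χ := by
  intro W _ _ _ σ hσ
  have hψ : invMonoidHom.comp χ ≠ 1 := by
    contrapose! hχ
    ext k
    simpa using DFunLike.congr_fun hχ k
  calc Module.finrank ℂ (homGIndChar (unipotent F) χ σ)
      ≤ Module.finrank ℂ (charSpace (toRepresentation σ).dual (invMonoidHom.comp χ)) :=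
        finrank_homGIndChar_le
    _ ≤ 1 := finrank_charSpace_le_one _ _
        (commute_hecke_of_antiHom _ _ antidiagTranspose antidiagTranspose_mul
          antidiagTranspose_unipotent (hecke_antidiagTranspose _ hψ))
        fun _ hf => span_dual_orbit_eq_top hσ hf

end GLMF
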